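/- For s ∈ ℕ and n ≥ 0, the function p_n^{α,β+s}(z) · z^{s/2} satisfies B_{α,β,s}[p_n^{α,β+s}(z) z^{s/2}] = (n+s/2)(n+s/2+α+β+1) · p_n^{α,β+s}(z) z^{s/2}, where B_{α,β,s} = (z∂_z)² + (α+β+1)(z∂_z) - (z∂_z² + (β+1)∂_z - s(s+2β)/(4z)). -/

import Mathlib

open Finset

/-- Shifted factorial (Pochhammer symbol) `(a)_m = a(a+1)⋯(a+m-1)`. -/
noncomputable def poch (a : ℝ) (m : ℕ) : ℝ := ∏ i ∈ Finset.range m, (a + i)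

/-- The Jacobi polynomial `p_n^{α,β}(z)` normalized as in the paper. -/
noncomputable def jacobiP (α β : ℝ) (n : ℕ) (z : ℝ) : ℝ :=
  (-1 : ℝ) ^ n * poch (α + β + 1) n / (Nat.factorial n) *
    ∑ m ∈ Finset.range (n + 1),
      poch (-(n : ℝ)) m * poch ((n : ℝ) + α + β + 1) m /
        (poch (β + 1) m * Nat.factorial m) * z ^ m

/-- The operator `D₁ = z ∂_z`. -/
noncomputable def D1 (f : ℝ → ℝ) : ℝ → ℝ := fun z => z * deriv f z

/-- The operator `D_{2,s} = z ∂_z² + (β+1) ∂_z - s(s+2β)/(4z)`. -/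
noncomputable def D2s (β : ℝ) (s : ℕ) (f : ℝ → ℝ) : ℝ → ℝ :=
  fun z => z * deriv (deriv f) z + (β + 1) * deriv f z
    - ((s : ℝ) * ((s : ℝ) + 2 * β)) / (4 * z) * f z

/-- The operator `B_{α,β,s} = D₁² + (α+β+1) D₁ - D_{2,s}`. -/
noncomputable def Babs (α β : ℝ) (s : ℕ) (f : ℝ → ℝ) : ℝ → ℝ :=
  fun z => D1 (D1 f) z + (α + β + 1) * D1 f z - D2s β s f z

noncomputable def jcoef (α γ : ℝ) (n m : ℕ) : ℝ :=
  poch (-(n : ℝ)) m * poch ((n : ℝ) + α + γ + 1) m / (poch (γ + 1) m * Nat.factorial m)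

lemma poch_succ (a : ℝ) (m : ℕ) : poch a (m+1) = poch a m * (a + m) :=
  Finset.prod_range_succ _ _

lemma poch_ne_zero {γ : ℝ} (h : ∀ j : ℕ, γ + (j:ℝ) ≠ 0) (m : ℕ) : poch γ m ≠ 0 :=
  Finset.prod_ne_zero_iff.2 fun i _ => h i

lemma jcoef_rec (α γ : ℝ) (n : ℕ) (hγ : ∀ j : ℕ, γ + 1 + (j:ℝ) ≠ 0) (m : ℕ) :
    ((m:ℝ)+1) * (((m:ℝ)+1)+γ) * jcoef α γ n (m+1)
      = ((m:ℝ) - n) * ((m:ℝ) + (n:ℝ) + α + γ + 1) * jcoef α γ n m := by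
  have h1 : poch (γ+1) m ≠ 0 := poch_ne_zero hγ m
  have h2 : (γ + 1 + (m:ℝ)) ≠ 0 := hγ m
  have h3 : (Nat.factorial m : ℝ) ≠ 0 := Nat.cast_ne_zero.2 (Nat.factorial_ne_zero m)
  have h4 : ((m:ℝ) + 1) ≠ 0 := by positivity
  unfold jcoef
  rw [poch_succ, poch_succ, poch_succ, Nat.factorial_succ]
  push_cast
  field_simp
  ring

lemma jacobi_ode (α γ : ℝ) (n : ℕ) (hγ : ∀ j : ℕ, γ + 1 + (j:ℝ) ≠ 0) (z : ℝ) :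
    z * (z - 1) * (∑ m ∈ range (n+1), jcoef α γ n m * ((m:ℝ) * (((m - 1 : ℕ):ℝ) * z ^ (m - 1 - 1))))
      + ((α + γ + 2) * z - (γ + 1)) * (∑ m ∈ range (n+1), jcoef α γ n m * ((m:ℝ) * z ^ (m-1)))
      = (n:ℝ) * ((n:ℝ) + α + γ + 1) * ∑ m ∈ range (n+1), jcoef α γ n m * z ^ m := by
  rw [← sub_eq_zero, Finset.mul_sum, Finset.mul_sum, Finset.mul_sum,
    ← Finset.sum_add_distrib, ← Finset.sum_sub_distrib]
  have step : ∀ m : ℕ,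
      z * (z - 1) * (jcoef α γ n m * ((m:ℝ) * (((m - 1 : ℕ):ℝ) * z ^ (m - 1 - 1))))
        + ((α + γ + 2) * z - (γ + 1)) * (jcoef α γ n m * ((m:ℝ) * z ^ (m-1)))
        - (n:ℝ) * ((n:ℝ) + α + γ + 1) * (jcoef α γ n m * z ^ m)
      = ((m:ℝ) - n) * ((m:ℝ) + (n:ℝ) + α + γ + 1) * jcoef α γ n m * z ^ m
        - (m:ℝ) * ((m:ℝ) + γ) * jcoef α γ n m * z ^ (m-1) := by
    intro m
    match m with
    | 0 => simp
    | 1 => norm_num; ring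
    | (k+2) =>
      simp only [Nat.add_sub_cancel, show k+2-1 = k+1 from rfl, show k+1-1 = k from rfl]
      push_cast
      ring
  rw [Finset.sum_congr rfl fun m _ => step m, Finset.sum_sub_distrib, sub_eq_zero]
  rw [Finset.sum_range_succ, Finset.sum_range_succ']
  norm_num
  exact Finset.sum_congr rfl fun k _ => by
    linear_combination (-(z ^ k)) * jcoef_rec α γ n hγ k

theorem eigen_equation_shifted (α β : ℝ) (s : ℕ)
    (hβs : ∀ j : ℕ, β + (s : ℝ) + 1 + (j : ℝ) ≠ 0)
    (n : ℕ) (z : ℝ) (hz : 0 < z) :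
    Babs α β s (fun w => jacobiP α (β + s) n w * w ^ ((s : ℝ) / 2)) z
      = ((n : ℝ) + (s : ℝ) / 2) * ((n : ℝ) + (s : ℝ) / 2 + α + β + 1) *
          (jacobiP α (β + s) n z * z ^ ((s : ℝ) / 2)) := by
  set γ : ℝ := β + (s : ℝ) with hγdef
  set c : ℝ := (s : ℝ) / 2 with hcdef
  set Cst : ℝ := (-1 : ℝ) ^ n * poch (α + γ + 1) n / (Nat.factorial n : ℝ) with hCst
  set J : ℝ → ℝ := fun w => ∑ m ∈ range (n+1), jcoef α γ n m * w ^ m with hJ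
  set J1 : ℝ → ℝ := fun w => ∑ m ∈ range (n+1), jcoef α γ n m * ((m:ℝ) * w ^ (m-1)) with hJ1
  set J2 : ℝ → ℝ := fun w =>
    ∑ m ∈ range (n+1), jcoef α γ n m * ((m:ℝ) * (((m - 1 : ℕ):ℝ) * w ^ (m - 1 - 1))) with hJ2
  have hJP : ∀ w, jacobiP α γ n w = Cst * J w := by
    intro w; simp only [jacobiP, hCst, hJ, jcoef]
  have hJd : ∀ w : ℝ, HasDerivAt J (J1 w) w := by
    intro w
    exact HasDerivAt.fun_sum fun m _ => (hasDerivAt_pow m w).const_mul (jcoef α γ n m)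
  have hJ1d : ∀ w : ℝ, HasDerivAt J1 (J2 w) w := by
    intro w
    exact HasDerivAt.fun_sum fun m _ =>
      ((hasDerivAt_pow (m-1) w).const_mul ((m:ℝ))).const_mul (jcoef α γ n m)
  set F1 : ℝ → ℝ := fun w => Cst * J1 w * w ^ c + Cst * J w * (c * w ^ (c - 1)) with hF1
  have hPd : ∀ w : ℝ, HasDerivAt (fun x => jacobiP α γ n x) (Cst * J1 w) w := by
    intro w
    have := (hJd w).const_mul Cst
    simpa [hJP] using this
  have hFd : ∀ w : ℝ, 0 < w →
      HasDerivAt (fun x => jacobiP α γ n x * x ^ c) (F1 w) w := by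
    intro w hw
    have hr : HasDerivAt (fun x : ℝ => x ^ c) (c * w ^ (c - 1)) w :=
      Real.hasDerivAt_rpow_const (Or.inl hw.ne')
    have := (hPd w).fun_mul hr
    simpa [hJP, hF1] using this
  have hdF : ∀ w : ℝ, 0 < w →
      deriv (fun x => jacobiP α γ n x * x ^ c) w = F1 w := fun w hw => (hFd w hw).deriv
  have hev : ∀ᶠ w in nhds z, (0:ℝ) < w := eventually_gt_nhds hz
  have hEq : deriv (fun x => jacobiP α γ n x * x ^ c) =ᶠ[nhds z] F1 :=
    hev.mono fun w hw => hdF w hw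
  set F2v : ℝ := (Cst * J2 z * z ^ c + Cst * J1 z * (c * z ^ (c - 1)))
      + (Cst * J1 z * (c * z ^ (c - 1)) + Cst * J z * (c * ((c - 1) * z ^ (c - 2)))) with hF2v
  have hF1d : HasDerivAt F1 F2v z := by
    have hr : HasDerivAt (fun x : ℝ => x ^ c) (c * z ^ (c - 1)) z :=
      Real.hasDerivAt_rpow_const (Or.inl hz.ne')
    have hr2 : HasDerivAt (fun x : ℝ => x ^ (c - 1)) ((c - 1) * z ^ (c - 2)) z := by
      have := Real.hasDerivAt_rpow_const (x := z) (p := c - 1) (Or.inl hz.ne')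
      convert this using 2
      ring
    have h1 : HasDerivAt (fun w => Cst * J1 w * w ^ c)
        (Cst * J2 z * z ^ c + Cst * J1 z * (c * z ^ (c - 1))) z :=
      ((hJ1d z).const_mul Cst).mul hr
    have h2 : HasDerivAt (fun w => Cst * J w * (c * w ^ (c - 1)))
        (Cst * J1 z * (c * z ^ (c - 1)) + Cst * J z * (c * ((c - 1) * z ^ (c - 2)))) z :=
      ((hJd z).const_mul Cst).mul (hr2.const_mul c)
    exact h1.add h2
  have hd2 : deriv (deriv (fun x => jacobiP α γ n x * x ^ c)) z = F2v := by
    rw [hEq.deriv_eq]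
    exact hF1d.deriv
  have hD1d : deriv (fun w => w * deriv (fun x => jacobiP α γ n x * x ^ c) w) z
      = F1 z + z * F2v := by
    have heq2 : (fun w => w * deriv (fun x => jacobiP α γ n x * x ^ c) w)
        =ᶠ[nhds z] fun w => w * F1 w := hEq.mono fun w hw => by simp only [hw]
    rw [heq2.deriv_eq]
    have : HasDerivAt (fun w : ℝ => w * F1 w) (1 * F1 z + z * F2v) z :=
      (hasDerivAt_id z).mul hF1d
    simpa using this.deriv
  have ode := jacobi_ode α γ n hβs z
  have e1 : z ^ (c - 1) = z ^ c / z := by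
    rw [Real.rpow_sub hz, Real.rpow_one]
  have e2 : z ^ (c - 2) = z ^ c / z ^ 2 := by
    rw [show (2:ℝ) = ((2:ℕ):ℝ) by norm_num, Real.rpow_sub hz, Real.rpow_natCast]
  have hs2c : (s : ℝ) = 2 * c := by rw [hcdef]; ring
  have ode' : z * (z - 1) * J2 z + ((α + γ + 2) * z - (γ + 1)) * J1 z
      = (n:ℝ) * ((n:ℝ) + α + γ + 1) * J z := ode
  simp only [Babs, D1, D2s]
  rw [show D1 (fun w => jacobiP α γ n w * w ^ c)
      = fun w => w * deriv (fun x => jacobiP α γ n x * x ^ c) w from rfl]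
  rw [hD1d, hd2, hdF z hz, hJP z]
  simp only [hF1, hF2v]
  rw [e1, e2, hγdef] at *
  rw [hs2c]
  have hzc : z ^ c ≠ 0 := (Real.rpow_pos_of_pos hz c).ne'
  field_simp
  rw [hs2c] at ode'
  linear_combination (4 * z * Cst) * ode'
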